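/- Let p_1,...,p_n be feasible for the improved optimization problem. Then for every k = 2,...,n−1 and every ℓ = 1,...,min{k−1, n−k}, ∏_{i=1}^k p_i ≤ (11k/4)^{k/2} · p_{k+ℓ}^{k−ℓ} · p_k^ℓ. -/

import Mathlib

open BigOperators

/-- Positive reals `p 1, ..., p n` are feasible for the improved optimization
problem (Program 3.5): Wilkinson's constraints
`∏_{i=1}^k p_i ≤ k^{k/2} p_k^k` for `k = 1, ..., n`, together with
`∏_{i=1}^k p_i ≤ k^k p_{k+ℓ}^{k-ℓ} (p_k + p_{k+ℓ})^ℓ / ((k-ℓ)^{(k-ℓ)/2} ℓ^{ℓ/2})`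
for `k = 2, ..., n-1` and `ℓ = 1, ..., min (k-1) (n-k)`. -/
def ImpOptFeasible (n : ℕ) (p : ℕ → ℝ) : Prop :=
  (∀ k : ℕ, 1 ≤ k → k ≤ n → 0 < p k) ∧
  (∀ k : ℕ, 1 ≤ k → k ≤ n →
    ∏ i ∈ Finset.Icc 1 k, p i ≤ (k : ℝ) ^ ((k : ℝ) / 2) * p k ^ k) ∧
  (∀ k ℓ : ℕ, 2 ≤ k → k + 1 ≤ n → 1 ≤ ℓ → ℓ + 1 ≤ k → k + ℓ ≤ n →
    ∏ i ∈ Finset.Icc 1 k, p i ≤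
      (k : ℝ) ^ (k : ℝ) * p (k + ℓ) ^ (k - ℓ) * (p k + p (k + ℓ)) ^ ℓ /
        (((k : ℝ) - (ℓ : ℝ)) ^ (((k : ℝ) - (ℓ : ℝ)) / 2) * (ℓ : ℝ) ^ ((ℓ : ℝ) / 2)))

/-- Reals `q 1, ..., q n` are feasible for the improved linear program
(Program 3.8): `∑_{i=1}^k q_i ≤ (k/2) ln k + k q_k` for `k = 1, ..., n`, and
`∑_{i=1}^k q_i ≤ (k/2) ln (11k/4) + (k-ℓ) q_{k+ℓ} + ℓ q_k`
for `k = 2, ..., n-1` and `ℓ = 1, ..., min (k-1) (n-k)`. -/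
def ImpLPFeasible (n : ℕ) (q : ℕ → ℝ) : Prop :=
  (∀ k : ℕ, 1 ≤ k → k ≤ n →
    ∑ i ∈ Finset.Icc 1 k, q i ≤ ((k : ℝ) / 2) * Real.log k + (k : ℝ) * q k) ∧
  (∀ k ℓ : ℕ, 2 ≤ k → k + 1 ≤ n → 1 ≤ ℓ → ℓ + 1 ≤ k → k + ℓ ≤ n →
    ∑ i ∈ Finset.Icc 1 k, q i ≤
      ((k : ℝ) / 2) * Real.log (11 * (k : ℝ) / 4) +
        ((k : ℝ) - (ℓ : ℝ)) * q (k + ℓ) + (ℓ : ℝ) * q k)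

/-!
Write `a = p_k`, `b = p_{k+ℓ}`, `t = ℓ/k` and `x = b/a`. After dividing by `a^k`, Wilkinson's
constraint gives the claimed bound as soon as `x^{2(1-t)} ≥ 4/11`. The constant of the improved
constraint is `k^k / ((k-ℓ)^{(k-ℓ)/2} ℓ^{ℓ/2}) = k^{k/2} exp (k H(t) / 2)`, with `H` the binary
entropy, and its right-hand side grows with `x`, so it gives the claimed bound as soon as
`2t log(1+x) + H(t) ≤ log(11/4)`. It therefore suffices to find, for every `t ∈ [0,1)`, one
threshold `x` satisfying both conditions: larger ratios are handled by the first constraint,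
smaller ones by the second.

Near `t = 1/2` the margin is only about `0.008`, so the thresholds come from a certificate:
`[0,1]` is cut into 13 intervals, each with a rational threshold. On an interval the first
condition is worst at the left end, since `x ≤ 1`, and the entropy is bounded by its value at the
point closest to `1/2`; after exponentiating, both conditions become inequalities between natural
numbers, which the kernel checks.
-/

open Real Set

theorem binEntropy_eq_binEntropy_two_inv_sub_abs (p : ℝ) :
    binEntropy p = binEntropy (2⁻¹ - |p - 2⁻¹|) := by
  rcases le_total 2⁻¹ p with h | h
  · rw [abs_of_nonneg (sub_nonneg.2 h), ← binEntropy_one_sub p]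
    ring_nf
  · rw [abs_of_nonpos (sub_nonpos.2 h)]
    ring_nf

theorem binEntropy_le_of_abs_sub_two_inv_le {p q : ℝ} (hq : q ∈ Icc 0 1)
    (h : |p - 2⁻¹| ≤ |q - 2⁻¹|) : binEntropy q ≤ binEntropy p := by
  rw [binEntropy_eq_binEntropy_two_inv_sub_abs p, binEntropy_eq_binEntropy_two_inv_sub_abs q]
  have hq' : |q - 2⁻¹| ≤ 2⁻¹ := abs_le.2 ⟨by linarith [hq.1], by linarith [hq.2]⟩
  exact binEntropy_strictMonoOn.monotoneOn ⟨by linarith, by linarith [abs_nonneg (q - 2⁻¹)]⟩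
    ⟨by linarith, by linarith [abs_nonneg (p - 2⁻¹)]⟩ (by linarith)

theorem mul_binEntropy_div {m N : ℝ} (hN : N ≠ 0) :
    N * binEntropy (m / N) = N * log N - m * log m - (N - m) * log (N - m) := by
  have scaled (y : ℝ) : N * negMulLog (y / N) = negMulLog y - y / N * negMulLog N := by
    have h := negMulLog_mul (y / N) N
    rw [div_mul_cancel₀ y hN] at h
    linarith
  have hsub : 1 - m / N = (N - m) / N := by field_simp
  rw [binEntropy_eq_negMulLog_add_negMulLog_one_sub, hsub, mul_add, scaled, scaled]
  simp only [negMulLog]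
  field_simp
  ring

def IsSwitchPoint (t x : ℝ) : Prop :=
  4 / 11 ≤ x ^ (2 * (1 - t)) ∧ 2 * t * log (1 + x) + binEntropy t ≤ log (11 / 4)

theorem isSwitchPoint_of_mem_Icc {x v w s t : ℝ} (hx₀ : 0 < x) (hx₁ : x ≤ 1)
    (hA : 4 / 11 ≤ x ^ (2 * (1 - v))) (hB : 2 * w * log (1 + x) + binEntropy s ≤ log (11 / 4))
    (ht : t ∈ Icc v w) (hH : binEntropy t ≤ binEntropy s) : IsSwitchPoint t x := by
  refine ⟨hA.trans (rpow_le_rpow_of_exponent_ge hx₀ hx₁ (by linarith [ht.1])), ?_⟩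
  have : 2 * t * log (1 + x) ≤ 2 * w * log (1 + x) :=
    mul_le_mul_of_nonneg_right (by linarith [ht.2]) (log_nonneg (by linarith))
  linarith

/-- The threshold `num / den` for all `t ∈ [lo/N, hi/N]`, with `N` fixed by the certificate. -/
structure SwitchPiece where
  lo : ℕ
  hi : ℕ
  num : ℕ
  den : ℕ

namespace SwitchPiece

def peak (c : SwitchPiece) (N : ℕ) : ℕ := max c.lo (min c.hi (N / 2))

/-- The last two conditions are the two halves of `IsSwitchPoint` at `lo/N` and at `hi/N`
(with the entropy taken at `peak N / N`), multiplied by `N`, exponentiated and cleared of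
denominators. -/
def Valid (c : SwitchPiece) (N : ℕ) : Prop :=
  0 < c.num ∧ c.num ≤ c.den ∧ c.lo ≤ c.hi ∧ c.hi ≤ N ∧
  (2 * c.peak N = N ∨ 2 * c.hi ≤ N ∧ c.peak N = c.hi ∨ N ≤ 2 * c.lo ∧ c.peak N = c.lo) ∧
  4 ^ N * c.den ^ (2 * (N - c.lo)) ≤ 11 ^ N * c.num ^ (2 * (N - c.lo)) ∧
  4 ^ N * N ^ N * (c.den + c.num) ^ (2 * c.hi) ≤
    11 ^ N * c.den ^ (2 * c.hi) * c.peak N ^ c.peak N * (N - c.peak N) ^ (N - c.peak N)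

instance (c : SwitchPiece) (N : ℕ) : Decidable (c.Valid N) := by
  unfold Valid
  infer_instance

variable {c : SwitchPiece} {N : ℕ}

theorem four_div_eleven_le_rpow (hc : c.Valid N) (hN : 0 < N) :
    4 / 11 ≤ ((c.num : ℝ) / c.den) ^ (2 * (1 - (c.lo : ℝ) / N)) := by
  obtain ⟨hnum, hden, hlohi, hhi, -, hA, -⟩ := hc
  set e := 2 * (N - c.lo) with he
  have hden : (0 : ℝ) < c.den := by exact_mod_cast hnum.trans_le hden
  have hx : 0 < (c.num : ℝ) / c.den := by positivity
  have hpow : ((4 : ℝ) / 11) ^ N ≤ ((c.num : ℝ) / c.den) ^ e := by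
    have hA' : (4 : ℝ) ^ N * (c.den : ℝ) ^ e ≤ 11 ^ N * (c.num : ℝ) ^ e := by exact_mod_cast hA
    rw [div_pow, div_pow, div_le_div_iff₀ (by positivity) (by positivity)]
    linarith
  have hexp : 2 * (1 - (c.lo : ℝ) / N) * N = e := by
    rw [he, Nat.cast_mul, Nat.cast_sub (hlohi.trans hhi)]
    field_simp
    push_cast
    ring
  refine le_of_pow_le_pow_left₀ hN.ne' (rpow_nonneg hx.le _) (hpow.trans_eq ?_)
  rw [← rpow_natCast _ N, ← rpow_mul hx.le, hexp, rpow_natCast]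

theorem peak_le (hc : c.Valid N) : c.peak N ≤ N :=
  max_le (hc.2.2.1.trans hc.2.2.2.1) ((min_le_right _ _).trans (Nat.div_le_self _ _))

theorem two_mul_log_add_binEntropy_le (hc : c.Valid N) (hN : 0 < N) :
    2 * ((c.hi : ℝ) / N) * log (1 + (c.num : ℝ) / c.den) + binEntropy ((c.peak N : ℝ) / N) ≤
      log (11 / 4) := by
  have hm := peak_le hc
  obtain ⟨hnum, hden, -, -, -, -, hB⟩ := hc
  set m := c.peak N
  have hden : (0 : ℝ) < c.den := by exact_mod_cast hnum.trans_le hden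
  have hN' : (0 : ℝ) < N := by exact_mod_cast hN
  have hmm : (0 : ℝ) < (m : ℝ) ^ m := by exact_mod_cast Nat.pow_self_pos
  have hmm' : (0 : ℝ) < ((N - m : ℕ) : ℝ) ^ (N - m) := by exact_mod_cast Nat.pow_self_pos
  have hB' : (4 : ℝ) ^ N * (N : ℝ) ^ N * ((c.den : ℝ) + c.num) ^ (2 * c.hi) ≤
      11 ^ N * (c.den : ℝ) ^ (2 * c.hi) * (m : ℝ) ^ m * ((N - m : ℕ) : ℝ) ^ (N - m) := by
    exact_mod_cast hB
  have hlog := log_le_log (by positivity) hB'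
  rw [log_mul (by positivity) (by positivity), log_mul (by positivity) (by positivity),
    log_mul (by positivity) hmm'.ne', log_mul (by positivity) hmm.ne',
    log_mul (by positivity) (by positivity)] at hlog
  simp only [log_pow, Nat.cast_sub hm] at hlog
  have hH := mul_binEntropy_div (m := (m : ℝ)) hN'.ne'
  have h1x : log (1 + (c.num : ℝ) / c.den) = log ((c.den : ℝ) + c.num) - log c.den := by
    rw [← log_div (by positivity) hden.ne']
    congr 1
    field_simp
  rw [log_div (by norm_num) (by norm_num), h1x]
  refine le_of_mul_le_mul_left ?_ hN'
  have : (N : ℝ) * (2 * ((c.hi : ℝ) / N)) = 2 * c.hi := by field_simp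
  rw [mul_add, ← mul_assoc, this, hH]
  push_cast at hlog
  linarith

theorem abs_peak_div_sub_two_inv_le (hc : c.Valid N) (hN : 0 < N) {t : ℝ}
    (ht : t ∈ Icc ((c.lo : ℝ) / N) (c.hi / N)) : |(c.peak N : ℝ) / N - 2⁻¹| ≤ |t - 2⁻¹| := by
  have hN' : (0 : ℝ) < N := by exact_mod_cast hN
  obtain ⟨-, -, -, -, hpeak, -⟩ := hc
  rcases hpeak with hmid | ⟨hhi, hm⟩ | ⟨hlo, hm⟩
  · have : (c.peak N : ℝ) / N = 2⁻¹ := by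
      have h : 2 * (c.peak N : ℝ) = N := by exact_mod_cast hmid
      rw [div_eq_iff hN'.ne']
      linarith
    simp [this]
  · have : (c.hi : ℝ) / N ≤ 2⁻¹ := by
      have h : 2 * (c.hi : ℝ) ≤ N := by exact_mod_cast hhi
      rw [div_le_iff₀ hN']
      linarith
    rw [hm, abs_of_nonpos (by linarith), abs_of_nonpos (by linarith [ht.2])]
    linarith [ht.2]
  · have : 2⁻¹ ≤ (c.lo : ℝ) / N := by
      have h : (N : ℝ) ≤ 2 * c.lo := by exact_mod_cast hlo
      rw [le_div_iff₀ hN']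
      linarith
    rw [hm, abs_of_nonneg (by linarith), abs_of_nonneg (by linarith [ht.1])]
    linarith [ht.1]

theorem isSwitchPoint (hc : c.Valid N) (hN : 0 < N) {t : ℝ}
    (ht : t ∈ Icc ((c.lo : ℝ) / N) (c.hi / N)) : IsSwitchPoint t ((c.num : ℝ) / c.den) := by
  have hA := four_div_eleven_le_rpow hc hN
  have hB := two_mul_log_add_binEntropy_le hc hN
  have hpeak := abs_peak_div_sub_two_inv_le hc hN ht
  obtain ⟨hnum, hden, -, hhi, -⟩ := hc
  have hN' : (0 : ℝ) < N := by exact_mod_cast hN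
  have hden' : (0 : ℝ) < c.den := by exact_mod_cast hnum.trans_le hden
  have ht₀ : 0 ≤ t := le_trans (by positivity) ht.1
  have ht₁ : t ≤ 1 := ht.2.trans ((div_le_one hN').2 (by exact_mod_cast hhi))
  exact isSwitchPoint_of_mem_Icc (by positivity) ((div_le_one hden').2 (by exact_mod_cast hden))
    hA hB ht (binEntropy_le_of_abs_sub_two_inv_le ⟨ht₀, ht₁⟩ hpeak)

end SwitchPiece

theorem exists_isSwitchPoint_of_cover {N : ℕ} (hN : 0 < N) {cs : List SwitchPiece}
    (hvalid : ∀ c ∈ cs, c.Valid N) (hcover : ∀ a < N, ∃ c ∈ cs, c.lo ≤ a ∧ a < c.hi)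
    {t : ℝ} (ht : t ∈ Ico 0 1) : ∃ x, 0 < x ∧ IsSwitchPoint t x := by
  have hN' : (0 : ℝ) < N := by exact_mod_cast hN
  set a := ⌊t * N⌋₊
  have haN : a < N := (Nat.floor_lt (mul_nonneg ht.1 hN'.le)).2 (by nlinarith [ht.2])
  obtain ⟨c, hc, hlo, hhi⟩ := hcover a haN
  have hlo' : (c.lo : ℝ) / N ≤ t := by
    rw [div_le_iff₀ hN']
    exact (Nat.cast_le.2 hlo).trans (Nat.floor_le (mul_nonneg ht.1 hN'.le))
  have hhi' : t ≤ (c.hi : ℝ) / N := by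
    rw [le_div_iff₀ hN']
    exact (Nat.lt_floor_add_one _).le.trans (by exact_mod_cast hhi)
  have hcN := hvalid c hc
  refine ⟨_, ?_, SwitchPiece.isSwitchPoint hcN hN ⟨hlo', hhi'⟩⟩
  obtain ⟨hnum, hden, -⟩ := hcN
  exact div_pos (by exact_mod_cast hnum) (by exact_mod_cast hnum.trans_le hden)

def switchCertificate : List SwitchPiece :=
  [⟨0, 71, 604, 1000⟩, ⟨71, 84, 449, 1000⟩, ⟨84, 90, 407, 1000⟩, ⟨90, 93, 386, 1000⟩,
   ⟨93, 96, 375, 1000⟩, ⟨96, 98, 364, 1000⟩, ⟨98, 100, 356, 1000⟩, ⟨100, 102, 348, 1000⟩,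
   ⟨102, 105, 340, 1000⟩, ⟨105, 109, 328, 1000⟩, ⟨109, 116, 311, 1000⟩, ⟨116, 132, 279, 1000⟩,
   ⟨132, 192, 199, 1000⟩]

-- `decide +kernel`: the elaborator's `decide` does not evaluate powers with exponents above 256.
theorem exists_isSwitchPoint {t : ℝ} (ht : t ∈ Ico 0 1) : ∃ x, 0 < x ∧ IsSwitchPoint t x :=
  exists_isSwitchPoint_of_cover (N := 192) (by norm_num) (cs := switchCertificate)
    (by decide +kernel) (by decide +kernel) ht

theorem le_of_wilkinson_bound {P a b x : ℝ} {k ℓ : ℕ} (hk : 0 < k) (hℓk : ℓ ≤ k) (ha : 0 < a)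
    (hx : 0 < x) (hxab : x * a ≤ b) (hA : 4 / 11 ≤ x ^ (2 * (1 - (ℓ : ℝ) / k)))
    (hW : P ≤ (k : ℝ) ^ ((k : ℝ) / 2) * a ^ k) :
    P ≤ (11 * (k : ℝ) / 4) ^ ((k : ℝ) / 2) * b ^ (k - ℓ) * a ^ ℓ := by
  have hk' : (0 : ℝ) < k := by exact_mod_cast hk
  have hxk : (4 / 11 : ℝ) ^ ((k : ℝ) / 2) ≤ x ^ (k - ℓ) := by
    calc (4 / 11 : ℝ) ^ ((k : ℝ) / 2) ≤ (x ^ (2 * (1 - (ℓ : ℝ) / k))) ^ ((k : ℝ) / 2) :=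
          rpow_le_rpow (by norm_num) hA (by positivity)
      _ = x ^ (k - ℓ) := by
          rw [← rpow_mul hx.le, ← rpow_natCast, Nat.cast_sub hℓk]
          congr 1
          field_simp
  have hsplit : (11 * (k : ℝ) / 4) ^ ((k : ℝ) / 2) =
      (k : ℝ) ^ ((k : ℝ) / 2) * (11 / 4) ^ ((k : ℝ) / 2) := by
    rw [← mul_rpow hk'.le (by norm_num)]
    ring_nf
  have hinv : (11 / 4 : ℝ) ^ ((k : ℝ) / 2) * (4 / 11) ^ ((k : ℝ) / 2) = 1 := by
    rw [← mul_rpow (by norm_num) (by norm_num)]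
    norm_num
  calc P ≤ (k : ℝ) ^ ((k : ℝ) / 2) * a ^ k := hW
    _ = (k : ℝ) ^ ((k : ℝ) / 2) * ((11 / 4) ^ ((k : ℝ) / 2) * (4 / 11) ^ ((k : ℝ) / 2)) *
          a ^ (k - ℓ) * a ^ ℓ := by
        rw [hinv, mul_one, mul_assoc, ← pow_add, Nat.sub_add_cancel hℓk]
    _ ≤ (k : ℝ) ^ ((k : ℝ) / 2) * ((11 / 4) ^ ((k : ℝ) / 2) * x ^ (k - ℓ)) *
          a ^ (k - ℓ) * a ^ ℓ := by
        gcongr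
    _ = (11 * (k : ℝ) / 4) ^ ((k : ℝ) / 2) * (x * a) ^ (k - ℓ) * a ^ ℓ := by
        rw [hsplit, mul_pow]
        ring
    _ ≤ (11 * (k : ℝ) / 4) ^ ((k : ℝ) / 2) * b ^ (k - ℓ) * a ^ ℓ := by
        gcongr

theorem improved_bound_const_le {x : ℝ} {k ℓ : ℕ} (hℓ : 0 < ℓ) (hℓk : ℓ < k) (hx : 0 < x)
    (hB : 2 * ((ℓ : ℝ) / k) * log (1 + x) + binEntropy ((ℓ : ℝ) / k) ≤ log (11 / 4)) :
    (k : ℝ) ^ (k : ℝ) * (1 + x) ^ ℓ /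
        (((k : ℝ) - ℓ) ^ (((k : ℝ) - ℓ) / 2) * (ℓ : ℝ) ^ ((ℓ : ℝ) / 2)) ≤
      (11 * (k : ℝ) / 4) ^ ((k : ℝ) / 2) := by
  have hℓ' : (0 : ℝ) < ℓ := by exact_mod_cast hℓ
  have hkℓ : (0 : ℝ) < k - ℓ := sub_pos.2 (by exact_mod_cast hℓk)
  have hk : (0 : ℝ) < k := by linarith
  rw [← log_le_log_iff (by positivity) (by positivity), log_div (by positivity) (by positivity),
    log_mul (by positivity) (by positivity), log_mul (by positivity) (by positivity),
    log_rpow hk, log_rpow hkℓ, log_rpow hℓ', log_rpow (by positivity), log_pow,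
    mul_div_right_comm, log_mul (by norm_num) hk.ne', log_div (by norm_num) (by norm_num)]
  have hH := mul_binEntropy_div (m := (ℓ : ℝ)) hk.ne'
  have hB' := mul_le_mul_of_nonneg_left hB hk.le
  rw [mul_add, ← mul_assoc, ← mul_assoc, hH, log_div (by norm_num) (by norm_num)] at hB'
  have : (k : ℝ) * 2 * (ℓ / k) = 2 * ℓ := by field_simp
  rw [this] at hB'
  linarith

theorem le_of_improved_bound {P a b x : ℝ} {k ℓ : ℕ} (hℓ : 0 < ℓ) (hℓk : ℓ < k) (ha : 0 < a)
    (hb : 0 ≤ b) (hx : 0 < x) (hbxa : b ≤ x * a)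
    (hB : 2 * ((ℓ : ℝ) / k) * log (1 + x) + binEntropy ((ℓ : ℝ) / k) ≤ log (11 / 4))
    (hI : P ≤ (k : ℝ) ^ (k : ℝ) * b ^ (k - ℓ) * (a + b) ^ ℓ /
        (((k : ℝ) - ℓ) ^ (((k : ℝ) - ℓ) / 2) * (ℓ : ℝ) ^ ((ℓ : ℝ) / 2))) :
    P ≤ (11 * (k : ℝ) / 4) ^ ((k : ℝ) / 2) * b ^ (k - ℓ) * a ^ ℓ := by
  have hkℓ : (0 : ℝ) < k - ℓ := sub_pos.2 (by exact_mod_cast hℓk)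
  calc P ≤ (k : ℝ) ^ (k : ℝ) * b ^ (k - ℓ) * (a + b) ^ ℓ /
        (((k : ℝ) - ℓ) ^ (((k : ℝ) - ℓ) / 2) * (ℓ : ℝ) ^ ((ℓ : ℝ) / 2)) := hI
    _ ≤ (k : ℝ) ^ (k : ℝ) * b ^ (k - ℓ) * ((1 + x) * a) ^ ℓ /
        (((k : ℝ) - ℓ) ^ (((k : ℝ) - ℓ) / 2) * (ℓ : ℝ) ^ ((ℓ : ℝ) / 2)) := by
        gcongr
        linarith
    _ = (k : ℝ) ^ (k : ℝ) * (1 + x) ^ ℓ /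
        (((k : ℝ) - ℓ) ^ (((k : ℝ) - ℓ) / 2) * (ℓ : ℝ) ^ ((ℓ : ℝ) / 2)) * b ^ (k - ℓ) * a ^ ℓ := by
        rw [mul_pow]
        ring
    _ ≤ (11 * (k : ℝ) / 4) ^ ((k : ℝ) / 2) * b ^ (k - ℓ) * a ^ ℓ := by
        gcongr
        exact improved_bound_const_le hℓ hℓk hx hB

/-- Inequality 3.7: any feasible point of the improved optimization problem
satisfies `∏_{i=1}^k p_i ≤ (11k/4)^{k/2} p_{k+ℓ}^{k-ℓ} p_k^ℓ`. -/
theorem imp_opt_relaxed_constraint (n : ℕ) (p : ℕ → ℝ) (hp : ImpOptFeasible n p)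
    (k ℓ : ℕ) (hk2 : 2 ≤ k) (hkn : k + 1 ≤ n) (hℓ1 : 1 ≤ ℓ) (hℓk : ℓ + 1 ≤ k)
    (hkℓ : k + ℓ ≤ n) :
    ∏ i ∈ Finset.Icc 1 k, p i ≤
      (11 * (k : ℝ) / 4) ^ ((k : ℝ) / 2) * p (k + ℓ) ^ (k - ℓ) * p k ^ ℓ := by
  obtain ⟨hpos, hW, hI⟩ := hp
  have ht : (ℓ : ℝ) / k ∈ Ico 0 1 :=
    ⟨by positivity, (div_lt_one (by positivity)).2 (by exact_mod_cast hℓk)⟩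
  obtain ⟨x, hx, hA, hB⟩ := exists_isSwitchPoint ht
  have ha := hpos k (by omega) (by omega)
  have hb := hpos (k + ℓ) (by omega) hkℓ
  rcases le_total (x * p k) (p (k + ℓ)) with h | h
  · exact le_of_wilkinson_bound (by omega) (by omega) ha hx h hA (hW k (by omega) (by omega))
  · exact le_of_improved_bound (by omega) (by omega) ha hb.le hx h hB (hI k ℓ hk2 hkn hℓ1 hℓk hkℓ)
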